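/- arXiv:1602.04623 — 6 statements merged into one kernel-verified Lean document; each statement's English description precedes it below -/
import Mathlib

section
/- For any graph G, k(G) ≥ θ_e(G) − |V(G)| + p(G). -/
/-- A digraph (given by its arc relation) is acyclic if it has no directed cycle. -/
def Digraph.Acyclic {W : Type*} (A : W → W → Prop) : Prop :=
  ∀ v, ¬ Relation.TransGen A v v

/-- The competition graph of a digraph: distinct `x`, `y` are adjacent iff
they have a common out-neighbor. -/
def competitionGraph {W : Type*} (A : W → W → Prop) : SimpleGraph W where
  Adj x y := x ≠ y ∧ ∃ z, A x z ∧ A y z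
  symm := by
    constructor
    rintro x y ⟨h, z, hx, hy⟩
    exact ⟨h.symm, z, hy, hx⟩
  loopless := by
    constructor
    rintro x ⟨h, -⟩
    exact h rfl

/-- `G` together with `k` additional isolated vertices. -/
def addIsolated {V : Type*} (G : SimpleGraph V) (k : ℕ) : SimpleGraph (V ⊕ Fin k) where
  Adj x y := ∃ u v, G.Adj u v ∧ x = Sum.inl u ∧ y = Sum.inl v
  symm := by
    constructor
    rintro x y ⟨u, v, h, rfl, rfl⟩
    exact ⟨v, u, h.symm, rfl, rfl⟩
  loopless := by
    constructor
    rintro x ⟨u, v, h, rfl, hy⟩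
    exact G.loopless.irrefl u (Sum.inl.inj hy ▸ h)

/-- `F` is an edge clique cover of `G`. -/
def IsEdgeCliqueCover {V : Type*} (G : SimpleGraph V) (F : Finset (Set V)) : Prop :=
  (∀ C ∈ F, G.IsClique C) ∧ ∀ u v, G.Adj u v → ∃ C ∈ F, u ∈ C ∧ v ∈ C

/-- The edge clique cover number `θ_e(G)`. -/
noncomputable def eccNumber {V : Type*} (G : SimpleGraph V) : ℕ :=
  sInf {n | ∃ F : Finset (Set V), IsEdgeCliqueCover G F ∧ F.card = n}

/-- An acyclic digraph `A` on `V ⊕ Fin k` realizes `G` with `k` added isolated vertices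
if its competition graph is `G` together with `k` isolated vertices. -/
def Realizes {V : Type*} (G : SimpleGraph V) (k : ℕ)
    (A : (V ⊕ Fin k) → (V ⊕ Fin k) → Prop) : Prop :=
  Digraph.Acyclic A ∧ competitionGraph A = addIsolated G k

/-- The competition number `k(G)`. -/
noncomputable def compNumber {V : Type*} (G : SimpleGraph V) : ℕ :=
  sInf {k | ∃ A : (V ⊕ Fin k) → (V ⊕ Fin k) → Prop, Realizes G k A}

/-- The primary predator index `p(G)`: the maximum number of in-degree-0 vertices over
all acyclic digraphs whose competition graph is `G` plus `k(G)` isolated vertices. -/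
noncomputable def predatorIndex {V : Type*} (G : SimpleGraph V) : ℕ :=
  sSup {n | ∃ A : (V ⊕ Fin (compNumber G)) → (V ⊕ Fin (compNumber G)) → Prop,
    Realizes G (compNumber G) A ∧ {v | ∀ u, ¬ A u v}.ncard = n}

/-- `C` is a maximal clique of `G`. -/
def IsMaximalClique {V : Type*} (G : SimpleGraph V) (C : Set V) : Prop :=
  G.IsClique C ∧ ∀ D : Set V, G.IsClique D → C ⊆ D → C = D

/-- The acyclic digraph `A` accompanies the minimum edge clique cover `𝒞`. -/
def Accompanies {V : Type*} (G : SimpleGraph V) (𝒞 : Finset (Set V))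
    (A : (V ⊕ Fin (compNumber G)) → (V ⊕ Fin (compNumber G)) → Prop) : Prop :=
  Realizes G (compNumber G) A ∧
  ∃ w : 𝒞 → (V ⊕ Fin (compNumber G)), Function.Injective w ∧
    (∀ C : 𝒞, ∀ v ∈ (C : Set V), A (Sum.inl v) (w C)) ∧
    {x | ∃ u, A u x} = Set.range w

/-- `𝒞` is an effective competition cover of `G`. -/
def IsEffectiveCompetitionCover {V : Type*} (G : SimpleGraph V) (𝒞 : Finset (Set V)) : Prop :=
  IsEdgeCliqueCover G 𝒞 ∧ 𝒞.card = eccNumber G ∧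
  (∀ C ∈ 𝒞, IsMaximalClique G C) ∧
  ∃ A : (V ⊕ Fin (compNumber G)) → (V ⊕ Fin (compNumber G)) → Prop, Accompanies G 𝒞 A

/-- The diamond graph: `K₄` minus the edge between vertices `2` and `3`. -/
def diamondGraph : SimpleGraph (Fin 4) where
  Adj i j := i ≠ j ∧ ¬(i = 2 ∧ j = 3) ∧ ¬(i = 3 ∧ j = 2)
  symm := by
    constructor
    rintro i j ⟨h, h1, h2⟩
    exact ⟨h.symm, fun ⟨a, b⟩ => h2 ⟨b, a⟩, fun ⟨a, b⟩ => h1 ⟨b, a⟩⟩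
  loopless := by
    constructor
    rintro i ⟨h, -⟩
    exact h rfl

/-- `G` contains `H` as an induced subgraph. -/
def ContainsInduced {V W : Type*} (G : SimpleGraph V) (H : SimpleGraph W) : Prop :=
  ∃ f : W ↪ V, ∀ a b, G.Adj (f a) (f b) ↔ H.Adj a b

/-- `G` is diamond-free: it has no induced diamond. -/
def DiamondFree {V : Type*} (G : SimpleGraph V) : Prop :=
  ¬ ContainsInduced G diamondGraph

/-- `G` is chordal: it has no induced cycle of length at least `4`. -/
def Chordal {V : Type*} (G : SimpleGraph V) : Prop :=
  ∀ n, 4 ≤ n → ¬ ContainsInduced G (SimpleGraph.cycleGraph n)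

/-- The edge `uv` is occupied by `C`: `C` is the unique maximal clique covering `uv`. -/
def Occupies {V : Type*} (G : SimpleGraph V) (C : Set V) (u v : V) : Prop :=
  G.Adj u v ∧ IsMaximalClique G C ∧ u ∈ C ∧ v ∈ C ∧
    ∀ C' : Set V, IsMaximalClique G C' → u ∈ C' → v ∈ C' → C' = C

/-!
If an acyclic digraph realizes `G` with `k(G)` isolated vertices and has `p(G)` sources, the
in-neighbourhoods (restricted to `V`) of its `|V| + k(G) - p(G)` non-sources are cliques of `G`
covering every edge, so `θ_e(G) ≤ |V| + k(G) - p(G)`.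
-/

lemma addIsolated_adj_inl {V : Type*} (G : SimpleGraph V) (k : ℕ) (u v : V) :
    (addIsolated G k).Adj (Sum.inl u) (Sum.inl v) ↔ G.Adj u v := by
  simp [addIsolated]

lemma adj_iff_of_competitionGraph_eq {V : Type*} {G : SimpleGraph V} {k : ℕ}
    {A : (V ⊕ Fin k) → (V ⊕ Fin k) → Prop} (hA : competitionGraph A = addIsolated G k)
    (u v : V) : G.Adj u v ↔ u ≠ v ∧ ∃ z, A (Sum.inl u) z ∧ A (Sum.inl v) z := by
  rw [← addIsolated_adj_inl G k, ← hA]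
  simp [competitionGraph]

/-- Join every vertex to one fresh isolated vertex per edge containing it. -/
lemma exists_realizes {V : Type*} [Fintype V] (G : SimpleGraph V) :
    ∃ (k : ℕ) (A : (V ⊕ Fin k) → (V ⊕ Fin k) → Prop), Realizes G k A := by
  classical
  let e := Fintype.equivFin G.edgeSet
  refine ⟨_, fun x y => ∃ (u : V) (i : G.edgeSet),
      x = Sum.inl u ∧ y = Sum.inr (e i) ∧ u ∈ (i : Sym2 V), ?acyclic, ?competition⟩
  case acyclic =>
    -- every arc ends in `Sum.inr`, and no arc leaves it
    intro v hv
    obtain ⟨b, ⟨u, i, rfl, rfl, -⟩, hbv⟩ := Relation.TransGen.head'_iff.1 hv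
    rcases Relation.ReflTransGen.cases_head hbv with h | ⟨c, ⟨u', i', h, -⟩, -⟩ <;>
      exact Sum.inr_ne_inl h
  case competition =>
    ext x y
    constructor
    · rintro ⟨hne, z, ⟨u, i, rfl, rfl, hui⟩, ⟨v, j, rfl, hz, hvj⟩⟩
      obtain rfl : i = j := e.injective (Sum.inr.inj hz)
      have huv : u ≠ v := fun h => hne (congrArg Sum.inl h)
      have hi : (i : Sym2 V) = s(u, v) := (Sym2.mem_and_mem_iff huv).1 ⟨hui, hvj⟩
      exact ⟨u, v, G.mem_edgeSet.1 (hi ▸ i.2), rfl, rfl⟩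
    · rintro ⟨u, v, hadj, rfl, rfl⟩
      let i : G.edgeSet := ⟨s(u, v), G.mem_edgeSet.2 hadj⟩
      exact ⟨fun h => hadj.ne (Sum.inl.inj h), Sum.inr (e i),
        ⟨u, i, rfl, rfl, Sym2.mem_mk_left u v⟩, ⟨v, i, rfl, rfl, Sym2.mem_mk_right u v⟩⟩

lemma exists_realizes_compNumber {V : Type*} [Fintype V] (G : SimpleGraph V) :
    ∃ A : (V ⊕ Fin (compNumber G)) → (V ⊕ Fin (compNumber G)) → Prop,
      Realizes G (compNumber G) A := by
  obtain ⟨k, A, hA⟩ := exists_realizes G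
  exact Nat.sInf_mem (s := {k | ∃ A : (V ⊕ Fin k) → (V ⊕ Fin k) → Prop, Realizes G k A})
    ⟨k, A, hA⟩

lemma exists_realizes_ncard_sources_eq_predatorIndex {V : Type*} [Fintype V]
    (G : SimpleGraph V) :
    ∃ A : (V ⊕ Fin (compNumber G)) → (V ⊕ Fin (compNumber G)) → Prop,
      Realizes G (compNumber G) A ∧ {v | ∀ u, ¬ A u v}.ncard = predatorIndex G := by
  obtain ⟨A, hA⟩ := exists_realizes_compNumber G
  refine Nat.sSup_mem
    (s := {n | ∃ A : (V ⊕ Fin (compNumber G)) → (V ⊕ Fin (compNumber G)) → Prop,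
      Realizes G (compNumber G) A ∧ {v | ∀ u, ¬ A u v}.ncard = n})
    ⟨_, A, hA, rfl⟩ ⟨Nat.card (V ⊕ Fin (compNumber G)), ?_⟩
  rintro n ⟨A', -, rfl⟩
  exact Set.ncard_le_card _

lemma isEdgeCliqueCover_inNeighborhoods {V : Type*} {G : SimpleGraph V} {k : ℕ}
    {A : (V ⊕ Fin k) → (V ⊕ Fin k) → Prop} (hA : competitionGraph A = addIsolated G k)
    (T : Finset (V ⊕ Fin k)) (hT : ∀ x, (∃ u, A u x) → x ∈ T) :
    IsEdgeCliqueCover G (T.image fun x => {v | A (Sum.inl v) x}) := by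
  constructor
  · simp only [Finset.mem_image]
    rintro _ ⟨x, -, rfl⟩ v hv w hw hvw
    exact (adj_iff_of_competitionGraph_eq hA v w).2 ⟨hvw, x, hv, hw⟩
  · intro u v huv
    obtain ⟨-, z, hu, hv⟩ := (adj_iff_of_competitionGraph_eq hA u v).1 huv
    exact ⟨_, Finset.mem_image_of_mem _ (hT z ⟨_, hu⟩), hu, hv⟩

lemma eccNumber_le_ncard_nonsources {V : Type*} [Fintype V] {G : SimpleGraph V} {k : ℕ}
    {A : (V ⊕ Fin k) → (V ⊕ Fin k) → Prop} (hA : competitionGraph A = addIsolated G k) :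
    eccNumber G ≤ {x | ∃ u, A u x}.ncard := by
  classical
  set T := Finset.univ.filter fun x => ∃ u, A u x
  calc eccNumber G ≤ (T.image fun x => {v | A (Sum.inl v) x}).card :=
        Nat.sInf_le ⟨_, isEdgeCliqueCover_inNeighborhoods hA T (by simp [T]), rfl⟩
    _ ≤ T.card := Finset.card_image_le
    _ = {x | ∃ u, A u x}.ncard := by rw [← Set.ncard_coe_finset]; simp [T]

/-- `k(G) ≥ θ_e(G) − |V(G)| + p(G)`. -/
theorem stmt4 {V : Type*} [Fintype V] (G : SimpleGraph V) :
    (eccNumber G : ℤ) - (Fintype.card V : ℤ) + (predatorIndex G : ℤ) ≤ (compNumber G : ℤ) := by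
  obtain ⟨A, hA, hsources⟩ := exists_realizes_ncard_sources_eq_predatorIndex G
  have hcover := eccNumber_le_ncard_nonsources hA.2
  have hsplit := Set.ncard_add_ncard_compl {x | ∃ u, A u x}
  have hcompl : {x | ∃ u, A u x}ᶜ = {v | ∀ u, ¬ A u v} := by ext; simp
  rw [hcompl, hsources, Nat.card_sum, Nat.card_eq_fintype_card, Nat.card_eq_fintype_card,
    Fintype.card_fin] at hsplit
  omega
end

section
/- Every chordal graph has a perfect elimination ordering. -/
/-!
Dirac's argument. Let `a`, `b` be non-adjacent vertices of a chordal graph, `C` the component of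
`b` after deleting the closed neighbourhood of `a`, and `S` the set of neighbours of `C` outside
it, so `S ⊆ N(a)`. Two non-adjacent `x, y ∈ S` would close, together with `a` and a shortest
`x`–`y` path through `C`, a chordless cycle of length at least `4`; hence `S` is a clique. The
graph induced on `C ∪ S` misses `a`, so by induction it is complete or has two non-adjacent
simplicial vertices, and either way some vertex of `C` is simplicial in the whole graph. Thus
every non-complete chordal graph has two non-adjacent simplicial vertices, every nonempty one has
a simplicial vertex, and deleting simplicial vertices one at a time gives a perfect elimination
ordering.
-/

open SimpleGraph

theorem cycleGraph_adj_iff_val {n : ℕ} {u v : Fin (n + 2)} :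
    (cycleGraph (n + 2)).Adj u v ↔ (u : ℕ) + 1 = v ∨ (v : ℕ) + 1 = u ∨
      (u : ℕ) + v = n + 1 ∧ ((u : ℕ) = 0 ∨ (v : ℕ) = 0) := by
  rw [cycleGraph_adj']
  rcases lt_trichotomy u v with h | rfl | h
  · rw [Fin.coe_sub_iff_lt.mpr h, Fin.coe_sub_iff_le.mpr h.le]
    have : (u : ℕ) < v := h
    omega
  · simp only [sub_self, Fin.val_zero, or_self]
    omega
  · rw [Fin.coe_sub_iff_le.mpr h.le, Fin.coe_sub_iff_lt.mpr h]
    have : (v : ℕ) < u := h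
    omega

section

variable {V : Type*} {G : SimpleGraph V}

theorem containsInduced_cycleGraph_of_apex {p : ℕ} (f : Fin (p + 1) ↪ V) {a : V}
    (ha : ∀ i, f i ≠ a) (hf : ∀ i j, G.Adj (f i) (f j) ↔ (pathGraph (p + 1)).Adj i j)
    (hapex : ∀ i, G.Adj a (f i) ↔ (i : ℕ) = 0 ∨ (i : ℕ) = p) :
    ContainsInduced G (cycleGraph (p + 2)) := by
  refine ⟨⟨Fin.snoc f a, Fin.snoc_injective_of_injective f.injective ?_⟩, fun i j => ?_⟩
  · rintro ⟨i, hi⟩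
    exact ha i hi
  induction i using Fin.lastCases <;> induction j using Fin.lastCases <;>
    simp only [Function.Embedding.coeFn_mk, Fin.snoc_castSucc, Fin.snoc_last,
      cycleGraph_adj_iff_val, Fin.val_castSucc, Fin.val_last, pathGraph_adj, hf, hapex,
      G.adj_comm _ a, G.irrefl, false_iff] <;>
    omega

theorem SimpleGraph.Walk.adj_getVert_iff_pathGraph_adj {u v : V} {w : G.Walk u v}
    (hw : w.length = G.dist u v) (i j : Fin (w.length + 1)) :
    G.Adj (w.getVert i) (w.getVert j) ↔ (pathGraph (w.length + 1)).Adj i j := by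
  have no_chord : ∀ i j : ℕ, i + 1 < j → j ≤ w.length → ¬ G.Adj (w.getVert i) (w.getVert j) :=
    fun i j hij hj hadj => by
      have := dist_le ((w.take i).append (.cons hadj (w.drop j)))
      simp only [Walk.length_append, Walk.length_cons, Walk.take_length,
        Walk.drop_length] at this
      omega
  rw [pathGraph_adj]
  refine ⟨fun hadj => ?_, ?_⟩
  · rcases lt_trichotomy (i : ℕ) j with h | h | h
    · by_contra
      exact no_chord i j (by omega) (by omega) hadj
    · exact absurd (congrArg w.getVert h ▸ hadj) G.irrefl
    · by_contra
      exact no_chord j i (by omega) (by omega) hadj.symm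
  · rintro (h | h)
    · exact h ▸ w.adj_getVert_succ (by omega)
    · exact (h ▸ w.adj_getVert_succ (by omega)).symm

def SimpleGraph.spanningInduce (G : SimpleGraph V) (T : Set V) : SimpleGraph V where
  Adj u v := G.Adj u v ∧ u ∈ T ∧ v ∈ T
  symm := ⟨fun _ _ h => ⟨h.1.symm, h.2.2, h.2.1⟩⟩
  loopless := ⟨fun _ h => G.irrefl h.1⟩

@[simp]
theorem SimpleGraph.spanningInduce_adj {T : Set V} {u v : V} :
    (G.spanningInduce T).Adj u v ↔ G.Adj u v ∧ u ∈ T ∧ v ∈ T := Iff.rfl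

theorem SimpleGraph.spanningInduce_mono {T T' : Set V} (h : T ⊆ T') :
    G.spanningInduce T ≤ G.spanningInduce T' :=
  fun _ _ ⟨huv, hu, hv⟩ => ⟨huv, h hu, h hv⟩

theorem SimpleGraph.Walk.getVert_mem_of_spanningInduce {T : Set V} {u v : V} (hu : u ∈ T) :
    ∀ (w : (G.spanningInduce T).Walk u v) (i : ℕ), w.getVert i ∈ T
  | .nil, _ => hu
  | .cons _ _, 0 => hu
  | .cons h w, i + 1 => by
    rw [Walk.getVert_cons_succ]
    exact getVert_mem_of_spanningInduce (spanningInduce_adj.mp h).2.2 w i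

theorem SimpleGraph.Reachable.mem_of_spanningInduce {T : Set V} {u v : V}
    (h : (G.spanningInduce T).Reachable u v) (hu : u ∈ T) : v ∈ T := by
  obtain ⟨w⟩ := h
  simpa using w.getVert_mem_of_spanningInduce hu w.length

/-- A shortest `x`–`y` walk through `T` is an induced path, and `a` is adjacent to its two ends
only, so otherwise it would close an induced cycle of length at least `4`. -/
theorem Chordal.adj_of_reachable (hG : Chordal G) {a x y : V} {T : Set V}
    (hax : G.Adj a x) (hay : G.Adj a y) (hxy : x ≠ y)
    (hT : ∀ v ∈ T, v ≠ x → v ≠ y → v ≠ a ∧ ¬ G.Adj a v)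
    (h : (G.spanningInduce T).Reachable x y) : G.Adj x y := by
  by_contra hnxy
  obtain ⟨w, hw⟩ := h.exists_walk_length_eq_dist
  have hlen : 2 ≤ w.length := hw ▸ h.one_lt_dist_of_ne_of_not_adj hxy fun h' => hnxy h'.1
  have hmem : ∀ i, w.getVert i ∈ T := w.getVert_mem_of_spanningInduce
    (w.adj_snd (by simp only [Walk.not_nil_iff_lt_length]; omega)).2.1
  have hinj : ∀ i j : Fin (w.length + 1), w.getVert i = w.getVert j → i = j := fun i j h =>
    Fin.ext <| (w.isPath_of_length_eq_dist hw).getVert_injOn (by simp; omega) (by simp; omega) h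
  have hinterior : ∀ i : Fin (w.length + 1), (i : ℕ) ≠ 0 → (i : ℕ) ≠ w.length →
      w.getVert i ≠ a ∧ ¬ G.Adj a (w.getVert i) := fun i h0 hl =>
    hT _ (hmem i) (fun h => h0 (by simpa using congrArg Fin.val (hinj i 0 (by simpa using h))))
      (fun h => hl (by simpa using congrArg Fin.val (hinj i (Fin.last _) (by simpa using h))))
  refine hG (w.length + 2) (by omega) <| containsInduced_cycleGraph_of_apex (a := a)
    ⟨fun i => w.getVert i, fun i j h => hinj i j h⟩ (fun i => ?_) (fun i j => ?_) (fun i => ?_)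
  · change w.getVert i ≠ a
    by_cases h0 : (i : ℕ) = 0
    · simpa [h0] using hax.ne'
    by_cases hl : (i : ℕ) = w.length
    · simpa [hl] using hay.ne'
    exact (hinterior i h0 hl).1
  · change G.Adj (w.getVert i) (w.getVert j) ↔ _
    rw [← w.adj_getVert_iff_pathGraph_adj hw, spanningInduce_adj]
    simp [hmem]
  · change G.Adj a (w.getVert i) ↔ _
    refine ⟨fun hadj => ?_, ?_⟩
    · by_contra h
      push Not at h
      exact (hinterior i h.1 h.2).2 hadj
    · rintro (h | h) <;> simpa [h]

def SimpleGraph.IsSimplicialIn (G : SimpleGraph V) (U : Set V) (v : V) : Prop :=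
  G.IsClique (G.neighborSet v ∩ U)

theorem Chordal.exists_clique_separator (hG : Chordal G) {U : Set V} {a b : V} (hb : b ∈ U)
    (hab : a ≠ b) (hnab : ¬ G.Adj a b) :
    ∃ C S : Set V, b ∈ C ∧ C ∪ S ⊆ U ∧ a ∉ S ∧ (∀ c ∈ C, c ≠ a ∧ ¬ G.Adj a c) ∧
      G.IsClique S ∧ ∀ c ∈ C, G.neighborSet c ∩ U ⊆ C ∪ S := by
  set D : Set V := {v ∈ U | v ≠ a ∧ ¬ G.Adj a v}
  set C : Set V := {v | (G.spanningInduce D).Reachable b v}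
  have hCD : C ⊆ D := fun v hv => hv.mem_of_spanningInduce ⟨hb, hab.symm, hnab⟩
  refine ⟨C, {s ∈ U | G.Adj a s ∧ ∃ c ∈ C, G.Adj c s}, Reachable.refl b,
    Set.union_subset (fun v hv => (hCD hv).1) (fun v hv => hv.1), fun h => G.irrefl h.2.1,
    fun c hc => (hCD hc).2, ?_, ?_⟩
  · rintro x ⟨-, hax, cx, hcx, hcxx⟩ y ⟨-, hay, cy, hcy, hcyy⟩ hxy
    have hDT : D ⊆ insert x (insert y D) := (Set.subset_insert _ _).trans (Set.subset_insert _ _)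
    refine hG.adj_of_reachable hax hay hxy ?_ <|
      (spanningInduce_adj.mpr ⟨hcxx.symm, Set.mem_insert _ _, hDT (hCD hcx)⟩).reachable.trans <|
      ((hcx.symm.trans hcy).mono (spanningInduce_mono hDT)).trans <|
      (spanningInduce_adj.mpr
        ⟨hcyy, hDT (hCD hcy), Set.mem_insert_of_mem _ (Set.mem_insert _ _)⟩).reachable
    rintro v (rfl | rfl | hv) hvx hvy
    · exact absurd rfl hvx
    · exact absurd rfl hvy
    · exact hv.2
  · rintro c hc u ⟨hcu, huU⟩
    by_cases hu : u ≠ a ∧ ¬ G.Adj a u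
    · have hcu' : (G.spanningInduce D).Adj c u := ⟨hcu, hCD hc, huU, hu⟩
      exact Or.inl (hc.trans hcu'.reachable)
    · refine Or.inr ⟨huU, ?_, c, hc, hcu⟩
      push Not at hu
      exact hu fun hua => (hCD hc).2.2 (hua ▸ hcu.symm)

theorem Chordal.exists_isSimplicialIn_of_not_adj (hG : Chordal G) {U : Set V}
    (ih : ∀ W ⊂ U, G.IsClique W ∨ ∃ s ∈ W, ∃ t ∈ W, s ≠ t ∧ ¬ G.Adj s t ∧
      G.IsSimplicialIn W s ∧ G.IsSimplicialIn W t)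
    {a b : V} (ha : a ∈ U) (hb : b ∈ U) (hab : a ≠ b) (hnab : ¬ G.Adj a b) :
    ∃ v ∈ U, v ≠ a ∧ ¬ G.Adj a v ∧ G.IsSimplicialIn U v := by
  obtain ⟨C, S, hbC, hCSU, haS, hCa, hS, hCnbr⟩ := hG.exists_clique_separator hb hab hnab
  have hsimp : ∀ c ∈ C, G.IsSimplicialIn (C ∪ S) c → G.IsSimplicialIn U c :=
    fun c hc => IsClique.subset fun u hu => ⟨hu.1, hCnbr c hc hu⟩
  have hCU : ∀ c ∈ C, c ∈ U := fun c hc => hCSU (Or.inl hc)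
  have hssub : C ∪ S ⊂ U := (Set.ssubset_iff_of_subset hCSU).mpr
    ⟨a, ha, by rintro (h | h); exacts [(hCa a h).1 rfl, haS h]⟩
  rcases ih _ hssub with hclique | ⟨s, hs, t, ht, hst, hnst, hsimps, hsimpt⟩
  · exact ⟨b, hb, (hCa b hbC).1, (hCa b hbC).2,
      hsimp b hbC (hclique.subset Set.inter_subset_right)⟩
  · have : s ∈ C ∨ t ∈ C := by
      by_contra h
      push Not at h
      exact hnst (hS (hs.resolve_left h.1) (ht.resolve_left h.2) hst)
    rcases this with hsC | htC
    · exact ⟨s, hCU s hsC, (hCa s hsC).1, (hCa s hsC).2, hsimp s hsC hsimps⟩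
    · exact ⟨t, hCU t htC, (hCa t htC).1, (hCa t htC).2, hsimp t htC hsimpt⟩

theorem Chordal.isClique_or_exists_isSimplicialIn_pair [Finite V] (hG : Chordal G) (U : Set V) :
    G.IsClique U ∨ ∃ s ∈ U, ∃ t ∈ U, s ≠ t ∧ ¬ G.Adj s t ∧
      G.IsSimplicialIn U s ∧ G.IsSimplicialIn U t := by
  induction U using WellFoundedLT.induction with
  | _ U ih =>
  by_cases hU : G.IsClique U
  · exact Or.inl hU
  obtain ⟨a, ha, b, hb, hab, hnab⟩ : ∃ a ∈ U, ∃ b ∈ U, a ≠ b ∧ ¬ G.Adj a b := by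
    simpa [SimpleGraph.IsClique, Set.Pairwise] using hU
  obtain ⟨s, hs, hsa, has, hsimps⟩ := hG.exists_isSimplicialIn_of_not_adj ih ha hb hab hnab
  obtain ⟨t, ht, hts, hst, hsimpt⟩ :=
    hG.exists_isSimplicialIn_of_not_adj ih hs ha hsa fun h => has h.symm
  exact Or.inr ⟨s, hs, t, ht, hts.symm, hst, hsimps, hsimpt⟩

theorem Chordal.exists_isClique_neighborSet [Finite V] [Nonempty V] (hG : Chordal G) :
    ∃ v, G.IsClique (G.neighborSet v) := by
  rcases hG.isClique_or_exists_isSimplicialIn_pair Set.univ with h | ⟨s, -, -, -, -, -, hs, -⟩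
  · exact ⟨Classical.arbitrary V, h.subset (Set.subset_univ _)⟩
  · exact ⟨s, by simpa [SimpleGraph.IsSimplicialIn] using hs⟩

theorem Chordal.comap {W : Type*} (hG : Chordal G) (f : W ↪ V) : Chordal (G.comap f) :=
  fun n hn ⟨g, hg⟩ => hG n hn ⟨g.trans f, hg⟩

def SimpleGraph.IsPerfectEliminationOrdering (G : SimpleGraph V) {n : ℕ} (e : Fin n → V) :
    Prop :=
  ∀ i j l : Fin n, i < j → i < l → j ≠ l →
    G.Adj (e i) (e j) → G.Adj (e i) (e l) → G.Adj (e j) (e l)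

theorem SimpleGraph.IsPerfectEliminationOrdering.cons {n : ℕ} {v : V} {f : Fin n → V}
    (hv : G.IsClique (G.neighborSet v))
    (hinj : Function.Injective (Fin.cons v f : Fin (n + 1) → V))
    (hf : G.IsPerfectEliminationOrdering f) :
    G.IsPerfectEliminationOrdering (Fin.cons v f : Fin (n + 1) → V) := by
  intro i j l hij hil hjl
  obtain ⟨j, rfl⟩ := Fin.exists_succ_eq.mpr (Fin.ne_zero_of_lt hij)
  obtain ⟨l, rfl⟩ := Fin.exists_succ_eq.mpr (Fin.ne_zero_of_lt hil)
  induction i using Fin.cases with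
  | zero => exact fun hvj hvl => hv hvj hvl (hinj.ne hjl)
  | succ i =>
    simp only [Fin.cons_succ, Fin.succ_lt_succ_iff, ne_eq, Fin.succ_inj] at *
    exact hf i j l hij hil hjl

theorem Chordal.exists_isPerfectEliminationOrdering [Fintype V] (hG : Chordal G) :
    ∃ e : Fin (Fintype.card V) ≃ V, G.IsPerfectEliminationOrdering e := by
  induction hn : Fintype.card V generalizing V with
  | zero => exact ⟨(Fintype.equivFinOfCardEq hn).symm, fun i => i.elim0⟩
  | succ n ih =>
    classical
    have : Nonempty V := Fintype.card_pos_iff.mp (by omega)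
    obtain ⟨v, hv⟩ := hG.exists_isClique_neighborSet
    obtain ⟨e', he'⟩ := ih (hG.comap (Function.Embedding.subtype (· ≠ v))) (by simp [hn])
    let e : Fin (n + 1) ≃ V :=
      (finSuccEquiv n).trans (e'.optionCongr.trans (Equiv.optionSubtypeNe v))
    have he : ⇑e = Fin.cons v fun i => (e' i : V) := by
      funext i
      induction i using Fin.cases <;> simp [e]
    exact ⟨e, he ▸ IsPerfectEliminationOrdering.cons hv (he ▸ e.injective) he'⟩

end

/-- every chordal graph has a perfect elimination ordering. -/
theorem stmt7 {V : Type*} [Fintype V] (G : SimpleGraph V) (hG : Chordal G) :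
    ∃ e : Fin (Fintype.card V) ≃ V,
      ∀ i j l : Fin (Fintype.card V), i < j → i < l → j ≠ l →
        G.Adj (e i) (e j) → G.Adj (e i) (e l) → G.Adj (e j) (e l) :=
  hG.exists_isPerfectEliminationOrdering
end

section
/- Every minimum edge clique cover of a chordal graph consisting of maximal cliques is an effective competition cover. -/
/-!
Dirac: in a chordal graph, a minimal separator of two nonadjacent vertices is a clique (two
shortest paths through the two sides between nonadjacent vertices of the separator would close an
induced cycle of length at least four), and induction on the two sides shows that every vertex set
that is not contained in a given clique has a vertex outside it that is simplicial relative to the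
set. A simplicial vertex of the union of a family of maximal cliques lies in exactly one of them,
so the cliques of the cover can be listed as `C₁, …, Cₘ` with a vertex `xᵢ₊₁ ∈ Cᵢ₊₁` outside
`C₁ ∪ ⋯ ∪ Cᵢ`. Arcs from all of `Cᵢ` to `wᵢ := xᵢ₊₁`, and from `Cₘ` to a spare vertex (an isolated
vertex of `G`, or else one of the `k(G) ≥ 1` added ones), give an acyclic digraph whose competition
graph is `G` plus `k(G)` isolated vertices and whose sinks are exactly the `wᵢ`.
-/

namespace SimpleGraph

variable {V : Type*}

/-- The subgraph induced on `X`, kept on all of `V` so that its walks and distances live in `V`. -/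
def restrict (G : SimpleGraph V) (X : Set V) : SimpleGraph V where
  Adj u v := G.Adj u v ∧ u ∈ X ∧ v ∈ X
  symm := ⟨fun _ _ h => ⟨h.1.symm, h.2.2, h.2.1⟩⟩
  loopless := ⟨fun u h => G.loopless.irrefl u h.1⟩

def IsSimplicial (G : SimpleGraph V) (v : V) : Prop := G.IsClique (G.neighborSet v)

def IsInducedPathOn (G : SimpleGraph V) (f : ℕ → V) (s : ℕ) : Prop :=
  ∀ i ≤ s, ∀ j ≤ s, (f i = f j → i = j) ∧ (G.Adj (f i) (f j) ↔ i + 1 = j ∨ j + 1 = i)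

variable {G : SimpleGraph V}

lemma restrict_mono {X Y : Set V} (h : X ⊆ Y) : G.restrict X ≤ G.restrict Y :=
  fun _ _ huv => ⟨huv.1, h huv.2.1, h huv.2.2⟩

lemma mem_of_reachable_restrict {X : Set V} {u v : V} (h : (G.restrict X).Reachable u v)
    (hu : u ∈ X) : v ∈ X := by
  obtain ⟨p⟩ := h
  induction p with
  | nil => exact hu
  | cons huw _ ih => exact ih huw.2.2

lemma reachable_restrict_reachableSet {X : Set V} {a z : V} (h : (G.restrict X).Reachable a z) :
    (G.restrict {w | (G.restrict X).Reachable a w}).Reachable a z := by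
  obtain ⟨p⟩ := h
  induction p with
  | nil => rfl
  | @cons a a' z hadj _ ih =>
    have hset : {w | (G.restrict X).Reachable a w} = {w | (G.restrict X).Reachable a' w} :=
      Set.ext fun w => ⟨hadj.reachable.symm.trans, hadj.reachable.trans⟩
    rw [hset]
    have hadj' : (G.restrict {w | (G.restrict X).Reachable a' w}).Adj a a' :=
      ⟨hadj.1, hadj.symm.reachable, Reachable.refl _⟩
    exact hadj'.reachable.trans ih

lemma dist_getVert_of_length_eq_dist {H : SimpleGraph V} {x y : V} (p : H.Walk x y)
    (hp : p.length = H.dist x y) {i : ℕ} (hi : i ≤ p.length) :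
    H.dist x (p.getVert i) = i := by
  rw [← length_eq_dist_of_subwalk hp (p.isSubwalk_take i), Walk.take_length]
  omega

lemma exists_isInducedPathOn_of_reachable_restrict {A : Set V} {x y : V} (hxy : x ≠ y)
    (hnadj : ¬ G.Adj x y) (h : (G.restrict (insert x (insert y A))).Reachable x y) :
    ∃ s, 2 ≤ s ∧ ∃ f : ℕ → V, f 0 = x ∧ f s = y ∧ G.IsInducedPathOn f s ∧
      ∀ i, 0 < i → i < s → f i ∈ A := by
  set Y := insert x (insert y A)
  -- along a shortest walk the `i`-th vertex is at distance `i` from `x`, so the walk is induced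
  obtain ⟨p, hp⟩ := h.exists_walk_length_eq_dist
  have hdist := fun i (hi : i ≤ p.length) => dist_getVert_of_length_eq_dist p hp hi
  have hY (i : ℕ) : p.getVert i ∈ Y := mem_of_reachable_restrict ⟨p.take i⟩ (by simp [Y])
  have hinj : ∀ i ≤ p.length, ∀ j ≤ p.length, p.getVert i = p.getVert j → i = j := by
    intro i hi j hj h
    rw [← hdist i hi, ← hdist j hj, h]
  refine ⟨p.length, ?_, p.getVert, p.getVert_zero, p.getVert_length,
    fun i hi j hj => ⟨hinj i hi j hj, ?_⟩, ?_⟩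
  · rw [hp]
    exact h.one_lt_dist_of_ne_of_not_adj hxy fun hadj => hnadj hadj.1
  · constructor
    · intro hadj
      have hij : i ≠ j := by
        rintro rfl
        exact G.loopless.irrefl _ hadj
      have hadjY : (G.restrict Y).Adj (p.getVert i) (p.getVert j) := ⟨hadj, hY i, hY j⟩
      have := hadjY.diff_dist_adj (u := x)
      rw [hdist i hi, hdist j hj] at this
      omega
    · rintro (rfl | rfl)
      · exact (p.adj_getVert_succ (by omega)).1
      · exact (p.adj_getVert_succ (by omega)).1.symm
  · intro i hi0 his
    rcases hY i with hx | hy | hA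
    · exact absurd (hinj i his.le 0 (Nat.zero_le _) (hx.trans p.getVert_zero.symm)) hi0.ne'
    · exact absurd (hinj i his.le _ le_rfl (hy.trans p.getVert_length.symm)) his.ne
    · exact hA

lemma cycleGraph_adj_iff_val {n : ℕ} (hn : 2 ≤ n) {i j : Fin n} :
    (cycleGraph n).Adj i j ↔
      i.val + 1 = j.val ∨ j.val + 1 = i.val ∨ (i.val = 0 ∧ j.val + 1 = n) ∨
        (j.val = 0 ∧ i.val + 1 = n) := by
  rw [cycleGraph_adj']
  rcases lt_trichotomy i.val j.val with h | h | h
  · rw [Fin.coe_sub_iff_lt.mpr h, Fin.coe_sub_iff_le.mpr h.le]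
    omega
  · rw [Fin.ext h, Fin.coe_sub_iff_le.mpr le_rfl]
    omega
  · rw [Fin.coe_sub_iff_lt.mpr h, Fin.coe_sub_iff_le.mpr h.le]
    omega

lemma containsInduced_cycleGraph_of_isInducedPathOn {f g : ℕ → V} {s t : ℕ} (hs : 2 ≤ s)
    (ht : 2 ≤ t) (hf : G.IsInducedPathOn f s) (hg : G.IsInducedPathOn g t) (h0 : f 0 = g 0)
    (hst : f s = g t)
    (hfg : ∀ i j, 0 < i → i < s → 0 < j → j < t → f i ≠ g j ∧ ¬ G.Adj (f i) (g j)) :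
    ContainsInduced G (cycleGraph (s + t)) := by
  -- walk along `f` from `f 0` to `f s = g t`, then back along `g`
  set c : ℕ → V := fun a => if a ≤ s then f a else g (s + t - a)
  have key : ∀ a b, a ≤ b → b < s + t →
      (c a = c b → a = b) ∧ (G.Adj (c a) (c b) ↔ a + 1 = b ∨ (a = 0 ∧ b + 1 = s + t)) := by
    intro a b hab hb
    by_cases hbs : b ≤ s
    · obtain ⟨hinj, hadj⟩ := hf a (hab.trans hbs) b hbs
      rw [show c a = f a from if_pos (hab.trans hbs), show c b = f b from if_pos hbs]
      exact ⟨fun h => hinj h, hadj.trans (by omega)⟩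
    rw [show c b = g (s + t - b) from if_neg hbs]
    by_cases has : a ≤ s
    · rw [show c a = f a from if_pos has]
      rcases Nat.eq_zero_or_pos a with rfl | ha0
      · obtain ⟨hinj, hadj⟩ := hg 0 (Nat.zero_le _) (s + t - b) (by omega)
        rw [h0]
        exact ⟨fun h => by have := hinj h; omega, hadj.trans (by omega)⟩
      rcases has.lt_or_eq with has | has
      · obtain ⟨hne, hnadj⟩ := hfg a (s + t - b) ha0 has (by omega) (by omega)
        exact ⟨fun h => absurd h hne, iff_of_false hnadj (by omega)⟩
      · obtain ⟨hinj, hadj⟩ := hg t le_rfl (s + t - b) (by omega)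
        rw [has, hst]
        exact ⟨fun h => by have := hinj h; omega, hadj.trans (by omega)⟩
    · obtain ⟨hinj, hadj⟩ := hg (s + t - a) (by omega) (s + t - b) (by omega)
      rw [show c a = g (s + t - a) from if_neg has]
      exact ⟨fun h => by have := hinj h; omega, hadj.trans (by omega)⟩
  refine ⟨⟨fun i => c i.val, ?_⟩, fun i j => ?_⟩
  · intro i j hij
    rcases le_total i.val j.val with h | h
    · exact Fin.ext ((key _ _ h j.isLt).1 hij)
    · exact (Fin.ext ((key _ _ h i.isLt).1 hij.symm)).symm
  · show G.Adj (c i.val) (c j.val) ↔ _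
    rw [cycleGraph_adj_iff_val (by omega)]
    rcases le_total i.val j.val with h | h
    · exact (key _ _ h j.isLt).2.trans (by omega)
    · exact G.adj_comm _ _ |>.trans <| (key _ _ h i.isLt).2.trans (by omega)

lemma exists_adj_of_reachable_restrict_insert {X : Set V} {x a b : V}
    (h : (G.restrict (insert x X)).Reachable a b) (hab : ¬ (G.restrict X).Reachable a b)
    (ha : a ∈ X) : ∃ z, (G.restrict X).Reachable a z ∧ G.Adj z x := by
  obtain ⟨p⟩ := h
  induction p with
  | nil => exact absurd (Reachable.refl _) hab
  | @cons a a' b hadj _ ih =>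
    by_cases ha' : a' = x
    · exact ⟨a, Reachable.refl _, ha' ▸ hadj.1⟩
    have hadjX : (G.restrict X).Adj a a' :=
      ⟨hadj.1, ha, (Set.mem_insert_iff.mp hadj.2.2).resolve_left ha'⟩
    obtain ⟨z, hz, hzx⟩ := ih (fun h => hab (hadjX.reachable.trans h)) hadjX.2.2
    exact ⟨z, hadjX.reachable.trans hz, hzx⟩

lemma exists_isInducedPathOn_through_component {X : Set V} {c x y zx zy : V} (hxy : x ≠ y)
    (hnadj : ¬ G.Adj x y) (hzx : (G.restrict X).Reachable c zx) (hx : G.Adj zx x)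
    (hzy : (G.restrict X).Reachable c zy) (hy : G.Adj zy y) :
    ∃ s, 2 ≤ s ∧ ∃ f : ℕ → V, f 0 = x ∧ f s = y ∧ G.IsInducedPathOn f s ∧
      ∀ i, 0 < i → i < s → (G.restrict X).Reachable c (f i) := by
  set A := {w | (G.restrict X).Reachable c w}
  set Y := insert x (insert y A)
  apply exists_isInducedPathOn_of_reachable_restrict (A := A) hxy hnadj
  have hA : (G.restrict Y).Reachable zx zy :=
    ((reachable_restrict_reachableSet hzx).symm.trans (reachable_restrict_reachableSet hzy)).mono
      (restrict_mono (Set.subset_insert _ _ |>.trans (Set.subset_insert _ _)))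
  have hxzx : (G.restrict Y).Adj x zx := ⟨hx.symm, by simp [Y], by simp [Y, A, hzx]⟩
  have hzyy : (G.restrict Y).Adj zy y := ⟨hy, by simp [Y, A, hzy], by simp [Y]⟩
  exact hxzx.reachable.trans (hA.trans hzyy.reachable)

lemma isSimplicial_restrict_of_isClique {T : Set V} (hT : G.IsClique T) (v : V) :
    (G.restrict T).IsSimplicial v :=
  fun _ hu _ hw huw => ⟨hT hu.2.2 hw.2.2 huw, hu.2.2, hw.2.2⟩

lemma IsSimplicial.restrict_of_subset {T T' : Set V} {v : V}
    (h : (G.restrict T').IsSimplicial v) (hT' : T' ⊆ T) (hv : v ∈ T')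
    (hnbr : ∀ w ∈ T, G.Adj v w → w ∈ T') : (G.restrict T).IsSimplicial v :=
  fun u hu w hw huw =>
    restrict_mono hT' (h ⟨hu.1, hv, hnbr u hu.2.2 hu.1⟩ ⟨hw.1, hv, hnbr w hw.2.2 hw.1⟩ huw)

lemma exists_maximal_not_reachable_restrict (T : Finset V) {a b : V}
    (ha : a ∈ T) (hb : b ∈ T) (hab : a ≠ b) (hnadj : ¬ G.Adj a b) :
    ∃ X ⊆ T, a ∈ X ∧ b ∈ X ∧ ¬ (G.restrict X).Reachable a b ∧
      ∀ x ∈ T, x ∉ X → (G.restrict (insert x (X : Set V))).Reachable a b := by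
  classical
  have hpair : ¬ (G.restrict {a, b}).Reachable a b := by
    rintro ⟨_ | ⟨h, _⟩⟩
    · exact hab rfl
    · obtain ⟨h, -, h'⟩ := h
      rcases (by simpa using h' : _ = a ∨ _ = b) with rfl | rfl
      · exact G.loopless.irrefl _ h
      · exact hnadj h
  obtain ⟨X, hX, hXmax⟩ := (T.powerset.filter fun X : Finset V =>
      a ∈ X ∧ b ∈ X ∧ ¬ (G.restrict (X : Set V)).Reachable a b).exists_max_image Finset.card
    ⟨{a, b}, by simp [Finset.insert_subset_iff, ha, hb, hpair]⟩
  obtain ⟨hXT, haX, hbX, hsep⟩ : X ⊆ T ∧ a ∈ X ∧ b ∈ X ∧ _ := by simpa using hX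
  refine ⟨X, hXT, haX, hbX, hsep, fun x hxT hxX => by_contra fun h => ?_⟩
  have := hXmax (insert x X) (by simp [Finset.insert_subset_iff, hxT, hXT, haX, hbX, h])
  rw [Finset.card_insert_of_notMem hxX] at this
  omega

end SimpleGraph

lemma Digraph.acyclic_of_lt {W : Type*} {A : W → W → Prop} (g : W → ℕ)
    (hg : ∀ x y, A x y → g x < g y) : Digraph.Acyclic A := fun _ hv =>
  lt_irrefl _ (Relation.transGen_eq_self (r := ((· < ·) : ℕ → ℕ → Prop)) ▸ hv.lift g hg)

lemma Digraph.Acyclic.exists_forall_not {W : Type*} [Finite W] [Nonempty W]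
    {A : W → W → Prop} (hA : Digraph.Acyclic A) : ∃ x, ∀ y, ¬ A x y := by
  have : IsTrans W (flip (Relation.TransGen A)) := ⟨fun _ _ _ h₁ h₂ => h₂.trans h₁⟩
  have : Std.Irrefl (flip (Relation.TransGen A)) := ⟨hA⟩
  obtain ⟨x, -, hx⟩ := (Finite.wellFounded_of_trans_of_irrefl
    (flip (Relation.TransGen A))).has_min Set.univ Set.univ_nonempty
  exact ⟨x, fun y h => hx y trivial (.single h)⟩

open SimpleGraph

section

variable {V : Type*} {G : SimpleGraph V}

lemma Chordal.adj_of_neighbors_on_both_sides (hG : Chordal G) {X : Set V} {a b x y : V}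
    (ha : a ∈ X) (hb : b ∈ X) (hab : ¬ (G.restrict X).Reachable a b) (hxy : x ≠ y)
    (hxa : ∃ z, (G.restrict X).Reachable a z ∧ G.Adj z x)
    (hya : ∃ z, (G.restrict X).Reachable a z ∧ G.Adj z y)
    (hxb : ∃ z, (G.restrict X).Reachable b z ∧ G.Adj z x)
    (hyb : ∃ z, (G.restrict X).Reachable b z ∧ G.Adj z y) : G.Adj x y := by
  by_contra hnadj
  obtain ⟨xa, haxa, hxa⟩ := hxa
  obtain ⟨ya, haya, hya⟩ := hya
  obtain ⟨xb, hbxb, hxb⟩ := hxb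
  obtain ⟨yb, hbyb, hyb⟩ := hyb
  obtain ⟨s, hs, f, hf0, hfs, hf, hfa⟩ :=
    exists_isInducedPathOn_through_component hxy hnadj haxa hxa haya hya
  obtain ⟨t, ht, g, hg0, hgt, hg, hgb⟩ :=
    exists_isInducedPathOn_through_component hxy hnadj hbxb hxb hbyb hyb
  refine hG (s + t) (by omega) (containsInduced_cycleGraph_of_isInducedPathOn hs ht hf hg
    (hf0.trans hg0.symm) (hfs.trans hgt.symm) fun i j hi0 his hj0 hjt => ?_)
  have hi := hfa i hi0 his
  have hj := hgb j hj0 hjt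
  refine ⟨fun h => hab (hi.trans (h ▸ hj.symm)), fun h => hab ?_⟩
  have hij : (G.restrict X).Adj (f i) (g j) :=
    ⟨h, mem_of_reachable_restrict hi ha, mem_of_reachable_restrict hj hb⟩
  exact hi.trans (hij.reachable.trans hj.symm)

theorem Chordal.exists_isSimplicial_restrict_notMem (hG : Chordal G) (T : Finset V) {K : Set V}
    (hK : G.IsClique K) (hTK : ¬ (T : Set V) ⊆ K) :
    ∃ v ∈ T, v ∉ K ∧ (G.restrict T).IsSimplicial v := by
  classical
  induction T using Finset.strongInduction generalizing K with
  | H T ih =>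
  by_cases hT : G.IsClique (T : Set V)
  · obtain ⟨v, hvT, hvK⟩ := Set.not_subset.mp hTK
    exact ⟨v, hvT, hvK, isSimplicial_restrict_of_isClique hT v⟩
  obtain ⟨a, ha, b, hb, hab, hnadj⟩ : ∃ a ∈ T, ∃ b ∈ T, a ≠ b ∧ ¬ G.Adj a b := by
    simpa [IsClique, Set.Pairwise] using hT
  obtain ⟨X, hXT, haX, hbX, hsep, hmax⟩ := exists_maximal_not_reachable_restrict T ha hb hab hnadj
  set R := (G.restrict (X : Set V)).Reachable
  have hnbr_a (x : V) (hx : x ∈ T \ X) : ∃ z, R a z ∧ G.Adj z x :=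
    exists_adj_of_reachable_restrict_insert (hmax x (Finset.mem_sdiff.1 hx).1
      (Finset.mem_sdiff.1 hx).2) hsep haX
  have hnbr_b (x : V) (hx : x ∈ T \ X) : ∃ z, R b z ∧ G.Adj z x :=
    exists_adj_of_reachable_restrict_insert (hmax x (Finset.mem_sdiff.1 hx).1
      (Finset.mem_sdiff.1 hx).2).symm (fun h => hsep h.symm) hbX
  have hS : G.IsClique ((T \ X : Finset V) : Set V) := fun x hx y hy hxy =>
    hG.adj_of_neighbors_on_both_sides haX hbX hsep hxy (hnbr_a x hx) (hnbr_a y hy)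
      (hnbr_b x hx) (hnbr_b y hy)
  -- the component of `c` in `X`, together with the separator `T \ X`, is a smaller instance
  have simplicial_in_component :
      ∀ c ∈ X, ∀ d ∈ X, ¬ R c d → ∃ v, R c v ∧ (G.restrict T).IsSimplicial v := by
    intro c hc d hd hcd
    set T' := T.filter fun w => w ∉ X ∨ R c w
    have hT' : T' ⊂ T := Finset.filter_ssubset.mpr ⟨d, hXT hd, by simp [hd, hcd]⟩
    obtain ⟨v, hvT', hvS, hv⟩ := ih T' hT' hS fun h => by
      simpa [hc] using h (show c ∈ (T' : Set V) by simp [T', hXT hc, R])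
    have hvX : v ∈ X := by simpa [(Finset.mem_filter.1 hvT').1] using hvS
    have hcv : R c v := (Finset.mem_filter.1 hvT').2.resolve_left (not_not.2 hvX)
    refine ⟨v, hcv, hv.restrict_of_subset (Finset.coe_subset.2 (Finset.filter_subset _ _)) hvT'
      fun w hwT hvw => ?_⟩
    by_cases hwX : w ∈ X
    · have hvw' : (G.restrict (X : Set V)).Adj v w := ⟨hvw, hvX, hwX⟩
      simp [T', Finset.mem_coe.1 hwT, R, hcv.trans hvw'.reachable]
    · simp [T', Finset.mem_coe.1 hwT, hwX]
  obtain ⟨u, hau, hu⟩ := simplicial_in_component a haX b hbX hsep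
  obtain ⟨w, hbw, hw⟩ := simplicial_in_component b hbX a haX fun h => hsep h.symm
  have huX := mem_of_reachable_restrict hau haX
  have hwX := mem_of_reachable_restrict hbw hbX
  have huw : u ≠ w := fun h => hsep (hau.trans (h ▸ hbw.symm))
  have hnuw : ¬ G.Adj u w := fun h => by
    have huw' : (G.restrict (X : Set V)).Adj u w := ⟨h, huX, hwX⟩
    exact hsep (hau.trans (huw'.reachable.trans hbw.symm))
  by_cases huK : u ∈ K
  · exact ⟨w, hXT hwX, fun hwK => hnuw (hK huK hwK huw), hw⟩
  · exact ⟨u, hXT huX, huK, hu⟩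

lemma Chordal.exists_private_vertex [Fintype V] (hG : Chordal G) {S : Finset (Set V)}
    (hmax : ∀ C ∈ S, IsMaximalClique G C) (hne : ∀ C ∈ S, C.Nonempty) (hS : S.Nonempty) :
    ∃ C ∈ S, ∃ x ∈ C, ∀ D ∈ S, D ≠ C → x ∉ D := by
  classical
  set W := Finset.univ.filter fun v => ∃ C ∈ S, v ∈ C
  have hW {u : V} {D : Set V} (hD : D ∈ S) (hu : u ∈ D) : u ∈ (W : Set V) :=
    Finset.mem_filter.2 ⟨Finset.mem_univ _, D, hD, hu⟩
  obtain ⟨C₀, hC₀⟩ := hS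
  obtain ⟨x₀, hx₀⟩ := hne C₀ hC₀
  obtain ⟨v, hvW, -, hv⟩ := hG.exists_isSimplicial_restrict_notMem W isClique_empty
    fun h => Set.notMem_empty x₀ (h (hW hC₀ hx₀))
  obtain ⟨C, hC, hvC⟩ := (Finset.mem_filter.1 hvW).2
  -- every member of `S` through `v` lies in the clique formed by `v` and its neighbours in `W`
  set K := {u | u = v ∨ (G.restrict W).Adj v u}
  have hK : G.IsClique K := by
    rintro p (rfl | hp) q (rfl | hq) hpq
    · exact absurd rfl hpq
    · exact hq.1
    · exact hp.1.symm
    · exact (hv hp hq hpq).1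
  have hsub (D : Set V) (hD : D ∈ S) (hvD : v ∈ D) : D = K := by
    refine (hmax D hD).2 K hK fun u hu => ?_
    by_cases huv : u = v
    · exact Or.inl huv
    · exact Or.inr ⟨(hmax D hD).1 hvD hu (Ne.symm huv), hvW, hW hD hu⟩
  exact ⟨C, hC, v, hvC, fun D hD hDC hvD => hDC ((hsub D hD hvD).trans (hsub C hC hvC).symm)⟩

lemma Chordal.exists_sinks [Fintype V] (hG : Chordal G) {ι : Type*} (S : Finset (Set V))
    (hmax : ∀ C ∈ S, IsMaximalClique G C) (hne : ∀ C ∈ S, C.Nonempty) (z : V ⊕ ι)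
    (hz : ∀ C ∈ S, ∀ v ∈ C, Sum.inl v ≠ z) :
    ∃ (w : Set V → V ⊕ ι) (r : Set V → ℕ), Set.InjOn w S ∧
      (∀ C ∈ S, w C = z ∨ ∃ D ∈ S, ∃ v ∈ D, w C = Sum.inl v) ∧
      ∀ C ∈ S, ∀ D ∈ S, ∀ v ∈ C, w D = Sum.inl v → r D < r C := by
  classical
  induction S using Finset.strongInduction generalizing z with
  | H S ih =>
  rcases S.eq_empty_or_nonempty with rfl | hS
  · exact ⟨fun _ => z, fun _ => 0, by simp⟩
  -- the clique `C` with a private vertex `x` comes last and is given the spare sink `z`;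
  -- `x` serves as the spare sink of the remaining cliques
  obtain ⟨C, hC, x, hxC, hx⟩ := hG.exists_private_vertex hmax hne hS
  set S' := S.erase C
  have hS'S {D : Set V} (hD : D ∈ S') : D ≠ C ∧ D ∈ S := Finset.mem_erase.1 hD
  have hSS' {D : Set V} (hD : D ∈ S) (hDC : D ≠ C) : D ∈ S' := Finset.mem_erase.2 ⟨hDC, hD⟩
  obtain ⟨w', r', hinj', hval', hr'⟩ := ih S' (Finset.erase_ssubset hC)
    (fun D hD => hmax D (hS'S hD).2) (fun D hD => hne D (hS'S hD).2) (Sum.inl x)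
    fun D hD v hv h => hx D (hS'S hD).2 (hS'S hD).1 (Sum.inl_injective h ▸ hv)
  have hw'z (D : Set V) (hD : D ∈ S') : w' D ≠ z := by
    rcases hval' D hD with h | ⟨E, hE, v, hv, h⟩
    · exact fun h' => hz C hC x hxC (h.symm.trans h')
    · exact fun h' => hz E (hS'S hE).2 v hv (h.symm.trans h')
  refine ⟨Function.update w' C z, Function.update r' C (S'.sup r' + 1), ?_, ?_, ?_⟩
  · intro D₁ hD₁ D₂ hD₂ h
    by_cases h₁ : D₁ = C <;> by_cases h₂ : D₂ = C
    · exact h₁.trans h₂.symm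
    · rw [h₁, Function.update_self, Function.update_of_ne h₂] at h
      exact absurd h.symm (hw'z D₂ (hSS' hD₂ h₂))
    · rw [h₂, Function.update_self, Function.update_of_ne h₁] at h
      exact absurd h (hw'z D₁ (hSS' hD₁ h₁))
    · rw [Function.update_of_ne h₁, Function.update_of_ne h₂] at h
      exact hinj' (hSS' hD₁ h₁) (hSS' hD₂ h₂) h
  · intro D hD
    by_cases hDC : D = C
    · exact Or.inl (by rw [hDC, Function.update_self])
    rw [Function.update_of_ne hDC]
    rcases hval' D (hSS' hD hDC) with h | ⟨E, hE, v, hv, h⟩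
    · exact Or.inr ⟨C, hC, x, hxC, h⟩
    · exact Or.inr ⟨E, (hS'S hE).2, v, hv, h⟩
  · intro E hE D hD v hv h
    by_cases hDC : D = C
    · rw [hDC, Function.update_self] at h
      exact absurd h.symm (hz E hE v hv)
    rw [Function.update_of_ne hDC] at h ⊢
    by_cases hEC : E = C
    · rw [hEC, Function.update_self]
      exact Nat.lt_succ_of_le (Finset.le_sup (hSS' hD hDC))
    · rw [Function.update_of_ne hEC]
      exact hr' E (hSS' hE hEC) D (hSS' hD hDC) v hv h

lemma compNumber_pos [Finite V] [Nonempty V] (hiso : ∀ v, ∃ u, G.Adj v u)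
    (hk : ∃ k A, Realizes G k A) : 0 < compNumber G := by
  refine Nat.pos_of_ne_zero fun h0 => ?_
  have : compNumber G ∈ {k | ∃ A, Realizes G k A} := Nat.sInf_mem hk
  rw [h0] at this
  obtain ⟨A, hA, hcomp⟩ := this
  obtain ⟨x, hx⟩ := hA.exists_forall_not
  rcases x with u | i
  swap
  · exact i.elim0
  obtain ⟨v, huv⟩ := hiso u
  have : (competitionGraph A).Adj (.inl u) (.inl v) := hcomp ▸ ⟨u, v, huv, rfl, rfl⟩
  obtain ⟨-, y, hy, -⟩ := this
  exact hx y hy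

lemma IsEdgeCliqueCover.exists_adj_of_card_eq_eccNumber {𝒞 : Finset (Set V)}
    (hcov : IsEdgeCliqueCover G 𝒞) (hmin : 𝒞.card = eccNumber G) :
    ∀ C ∈ 𝒞, ∃ u ∈ C, ∃ v ∈ C, G.Adj u v := by
  classical
  intro C hC
  by_contra! h
  have hcov' : IsEdgeCliqueCover G (𝒞.erase C) := by
    refine ⟨fun D hD => hcov.1 D (Finset.mem_of_mem_erase hD), fun u v huv => ?_⟩
    obtain ⟨D, hD, hu, hv⟩ := hcov.2 u v huv
    exact ⟨D, Finset.mem_erase.2 ⟨fun hDC => h u (hDC ▸ hu) v (hDC ▸ hv) huv, hD⟩, hu, hv⟩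
  have : eccNumber G ≤ (𝒞.erase C).card := Nat.sInf_le ⟨_, hcov', rfl⟩
  rw [Finset.card_erase_of_mem hC] at this
  have := Finset.card_pos.2 ⟨C, hC⟩
  omega

lemma exists_realizes_of_sinks {k : ℕ} {𝒞 : Finset (Set V)} (hcov : IsEdgeCliqueCover G 𝒞)
    (hne : ∀ C ∈ 𝒞, C.Nonempty) (w : 𝒞 → V ⊕ Fin k) (hw : Function.Injective w) (r : 𝒞 → ℕ)
    (hr : ∀ C D : 𝒞, ∀ v ∈ (C : Set V), w D = Sum.inl v → r D < r C) :
    ∃ A, Realizes G k A ∧ (∀ C : 𝒞, ∀ v ∈ (C : Set V), A (Sum.inl v) (w C)) ∧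
      {x | ∃ u, A u x} = Set.range w := by
  classical
  set A : V ⊕ Fin k → V ⊕ Fin k → Prop :=
    fun x y => ∃ C : 𝒞, (∃ v ∈ (C : Set V), x = Sum.inl v) ∧ y = w C
  set g : V ⊕ Fin k → ℕ := fun y => if h : ∃ D, w D = y then r h.choose + 1 else 0
  have hg (C : 𝒞) : g (w C) = r C + 1 := by
    have h : ∃ D, w D = w C := ⟨C, rfl⟩
    simp only [g, dif_pos h, hw h.choose_spec]
  have hacyc : Digraph.Acyclic A := by
    refine Digraph.acyclic_of_lt g ?_
    rintro _ _ ⟨C, ⟨v, hv, rfl⟩, rfl⟩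
    rw [hg]
    by_cases h : ∃ D, w D = Sum.inl v
    · obtain ⟨D, hD⟩ := h
      rw [← hD, hg]
      exact Nat.succ_lt_succ (hr C D v hv hD)
    · simp only [g, dif_neg h]
      exact Nat.succ_pos _
  refine ⟨A, ⟨hacyc, ?_⟩, fun C v hv => ⟨C, ⟨v, hv, rfl⟩, rfl⟩, ?_⟩
  · ext x y
    constructor
    · rintro ⟨hxy, _, ⟨C, ⟨u, hu, rfl⟩, rfl⟩, ⟨D, ⟨v, hv, rfl⟩, hCD⟩⟩
      cases hw hCD
      exact ⟨u, v, hcov.1 C C.2 hu hv fun h => hxy (h ▸ rfl), rfl, rfl⟩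
    · rintro ⟨u, v, huv, rfl, rfl⟩
      obtain ⟨C, hC, hu, hv⟩ := hcov.2 u v huv
      exact ⟨fun h => huv.ne (Sum.inl_injective h), w ⟨C, hC⟩, ⟨⟨C, hC⟩, ⟨u, hu, rfl⟩, rfl⟩,
        ⟨⟨C, hC⟩, ⟨v, hv, rfl⟩, rfl⟩⟩
  · ext x
    constructor
    · rintro ⟨_, C, -, rfl⟩
      exact ⟨C, rfl⟩
    · rintro ⟨C, rfl⟩
      obtain ⟨v, hv⟩ := hne C C.2
      exact ⟨Sum.inl v, C, ⟨v, hv, rfl⟩, rfl⟩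

lemma Chordal.exists_realizes [Fintype V] (hG : Chordal G) {𝒞 : Finset (Set V)}
    (hcov : IsEdgeCliqueCover G 𝒞) (hmax : ∀ C ∈ 𝒞, IsMaximalClique G C)
    (hne : ∀ C ∈ 𝒞, C.Nonempty) {k : ℕ}
    (hz : 𝒞.Nonempty → ∃ z : V ⊕ Fin k, ∀ C ∈ 𝒞, ∀ v ∈ C, Sum.inl v ≠ z) :
    ∃ A, Realizes G k A ∧ ∃ w : 𝒞 → V ⊕ Fin k, Function.Injective w ∧
      (∀ C : 𝒞, ∀ v ∈ (C : Set V), A (Sum.inl v) (w C)) ∧ {x | ∃ u, A u x} = Set.range w := by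
  obtain ⟨w, hw, r, hr⟩ : ∃ w : 𝒞 → V ⊕ Fin k, Function.Injective w ∧ ∃ r : 𝒞 → ℕ,
      ∀ C D : 𝒞, ∀ v ∈ (C : Set V), w D = Sum.inl v → r D < r C := by
    rcases 𝒞.eq_empty_or_nonempty with rfl | h𝒞
    · have h (C : (∅ : Finset (Set V))) : False := Finset.notMem_empty _ C.2
      exact ⟨fun C => (h C).elim, fun C => (h C).elim, 0, fun C => (h C).elim⟩
    obtain ⟨z, hz⟩ := hz h𝒞
    obtain ⟨w, r, hinj, -, hr⟩ := hG.exists_sinks 𝒞 hmax hne z hz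
    exact ⟨fun C => w C, fun C D h => Subtype.ext (hinj C.2 D.2 h), fun C => r C,
      fun C D v hv h => hr C C.2 D D.2 v hv h⟩
  obtain ⟨A, hA, harc, hrange⟩ := exists_realizes_of_sinks hcov hne w hw r hr
  exact ⟨A, hA, w, hw, harc, hrange⟩

end

/-- every minimum edge clique cover of a chordal graph consisting of maximal
cliques is an effective competition cover. -/
theorem stmt9 {V : Type*} [Fintype V] (G : SimpleGraph V) (hG : Chordal G)
    (𝒞 : Finset (Set V)) (hcov : IsEdgeCliqueCover G 𝒞) (hmin : 𝒞.card = eccNumber G)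
    (hmax : ∀ C ∈ 𝒞, IsMaximalClique G C) :
    IsEffectiveCompetitionCover G 𝒞 := by
  have hedge := hcov.exists_adj_of_card_eq_eccNumber hmin
  have hne (C : Set V) (hC : C ∈ 𝒞) : C.Nonempty :=
    let ⟨u, hu, _⟩ := hedge C hC
    ⟨u, hu⟩
  refine ⟨hcov, hmin, hmax, hG.exists_realizes hcov hmax hne fun h𝒞 => ?_⟩
  -- a spare sink: an isolated vertex of `G` if there is one, otherwise an added vertex
  by_cases hiso : ∃ z, ∀ u, ¬ G.Adj z u
  · obtain ⟨z, hz⟩ := hiso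
    refine ⟨Sum.inl z, fun C hC v hv h => ?_⟩
    obtain ⟨u, hu, u', hu', huu'⟩ := hedge C hC
    obtain rfl := Sum.inl_injective h
    rcases eq_or_ne u v with rfl | huv
    · exact hz u' huu'
    · exact hz u ((hmax C hC).1 hv hu huv.symm)
  push Not at hiso
  obtain ⟨C, hC⟩ := h𝒞
  have : Nonempty V := (hne C hC).to_subtype.map Subtype.val
  have hpos := compNumber_pos hiso ⟨1,
    (hG.exists_realizes hcov hmax hne fun _ => ⟨Sum.inr 0, by simp⟩).imp fun _ h => h.1⟩
  exact ⟨Sum.inr ⟨0, hpos⟩, by simp⟩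
end

section
/- In a diamond-free graph with at least one edge, the set of all maximal cliques of size at least 2 forms a minimum edge clique cover, i.e., θ_e(G) equals the number of maximal cliques of G containing at least one edge. -/
/-!
In a diamond-free graph an edge lies in only one maximal clique: if maximal cliques `C ≠ C'`
share the edge `uv`, a vertex `a ∈ C \ C'` has a non-neighbour `b ∈ C'`, and `u, v, a, b`
induce a diamond. So a member of an edge clique cover that covers an edge of a maximal clique
`C` lies inside `C` (extend it to a maximal clique, which shares that edge with `C`), and
distinct maximal cliques with an edge need distinct members of the cover. The maximal cliques
with an edge form a cover themselves, hence a minimum one.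
-/

section

variable {V : Type*} {G : SimpleGraph V}

theorem isMaximalClique_iff_maximal {C : Set V} :
    IsMaximalClique G C ↔ Maximal G.IsClique C := by
  rw [maximal_subset_iff]
  rfl

theorem SimpleGraph.IsClique.exists_isMaximalClique_superset [Finite V] {D : Set V}
    (hD : G.IsClique D) :
    ∃ C, IsMaximalClique G C ∧ D ⊆ C := by
  obtain ⟨C, hDC, hC⟩ := Finite.exists_le_maximal hD
  exact ⟨C, isMaximalClique_iff_maximal.2 hC, hDC⟩

theorem exists_isMaximalClique_of_adj [Finite V] {u v : V} (huv : G.Adj u v) :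
    ∃ C, IsMaximalClique G C ∧ 2 ≤ C.ncard ∧ u ∈ C ∧ v ∈ C := by
  obtain ⟨C, hC, huvC⟩ :=
    (SimpleGraph.isClique_pair.2 fun _ ↦ huv).exists_isMaximalClique_superset
  refine ⟨C, hC, ?_, huvC (Set.mem_insert u {v}), huvC (Set.mem_insert_of_mem u rfl)⟩
  calc 2 = ({u, v} : Set V).ncard := (Set.ncard_pair huv.ne).symm
    _ ≤ C.ncard := Set.ncard_le_ncard huvC

theorem containsInduced_diamondGraph {u v a b : V} (huv : G.Adj u v) (hua : G.Adj u a)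
    (hub : G.Adj u b) (hva : G.Adj v a) (hvb : G.Adj v b) (hab : a ≠ b) (hnab : ¬ G.Adj a b) :
    ContainsInduced G diamondGraph := by
  have hnba : ¬ G.Adj b a := fun h ↦ hnab h.symm
  have hadj : ∀ i j, G.Adj (![u, v, a, b] i) (![u, v, a, b] j) ↔ diamondGraph.Adj i j := by
    intro i j
    fin_cases i <;> fin_cases j <;>
      simp [diamondGraph, huv, hua, hub, hva, hvb, hnab, huv.symm, hua.symm, hub.symm,
        hva.symm, hvb.symm, hnba]
  refine ⟨⟨![u, v, a, b], fun i j hij ↦ ?_⟩, hadj⟩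
  by_contra hij'
  by_cases h : diamondGraph.Adj i j
  · exact ((hadj i j).2 h).ne hij
  · have hnon : (i = 2 ∧ j = 3) ∨ (i = 3 ∧ j = 2) := by
      simp only [diamondGraph] at h
      tauto
    rcases hnon with ⟨rfl, rfl⟩ | ⟨rfl, rfl⟩
    · exact hab hij
    · exact hab hij.symm

theorem DiamondFree.eq_of_adj_mem (hG : DiamondFree G) {u v : V} {C C' : Set V}
    (huv : G.Adj u v) (hC : IsMaximalClique G C) (hC' : IsMaximalClique G C')
    (hu : u ∈ C) (hv : v ∈ C) (hu' : u ∈ C') (hv' : v ∈ C') : C = C' := by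
  by_contra hne
  obtain ⟨a, ha, ha'⟩ := Set.not_subset.1 fun h ↦ hne (hC.2 C' hC'.1 h)
  have hnot : ¬ G.IsClique (insert a C') := fun h ↦
    ha' ((hC'.2 _ h (Set.subset_insert a C')) ▸ Set.mem_insert a C')
  obtain ⟨b, hb, hba, hnab⟩ : ∃ b ∈ C', b ≠ a ∧ ¬ G.Adj a b := by
    by_contra! hall
    exact hnot (hC'.1.insert fun b hb hba ↦ hall b hb hba.symm)
  have hua : G.Adj u a := hC.1 hu ha fun h ↦ ha' (h ▸ hu')
  have hva : G.Adj v a := hC.1 hv ha fun h ↦ ha' (h ▸ hv')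
  exact hG <| containsInduced_diamondGraph huv hua
    (hC'.1 hu' hb fun h ↦ hnab (h ▸ hua.symm)) hva
    (hC'.1 hv' hb fun h ↦ hnab (h ▸ hva.symm)) hba.symm hnab

theorem DiamondFree.exists_subset_of_isEdgeCliqueCover [Finite V] (hG : DiamondFree G)
    {C : Set V} {F : Finset (Set V)} (hC : IsMaximalClique G C) (h2 : 2 ≤ C.ncard)
    (hF : IsEdgeCliqueCover G F) : ∃ D ∈ F, D ⊆ C ∧ ∃ u v, G.Adj u v ∧ u ∈ D ∧ v ∈ D := by
  obtain ⟨u, v, hu, hv, hne⟩ := (Set.one_lt_ncard_iff).1 h2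
  have huv : G.Adj u v := hC.1 hu hv hne
  obtain ⟨D, hDF, huD, hvD⟩ := hF.2 u v huv
  obtain ⟨E, hE, hDE⟩ := (hF.1 D hDF).exists_isMaximalClique_superset
  have hEC : E = C := hG.eq_of_adj_mem huv hE hC (hDE huD) (hDE hvD) hu hv
  exact ⟨D, hDF, hEC ▸ hDE, u, v, huv, huD, hvD⟩

theorem DiamondFree.card_le_card_of_isEdgeCliqueCover [Finite V] (hG : DiamondFree G)
    {M F : Finset (Set V)} (hM : ∀ C ∈ M, IsMaximalClique G C ∧ 2 ≤ C.ncard)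
    (hF : IsEdgeCliqueCover G F) : M.card ≤ F.card := by
  choose! f hfF hfC u v huv hu hv using fun C hC ↦
    hG.exists_subset_of_isEdgeCliqueCover (hM C hC).1 (hM C hC).2 hF
  refine Finset.card_le_card_of_injOn f hfF fun C hC C' hC' hCC' ↦ ?_
  exact hG.eq_of_adj_mem (huv C hC) (hM C hC).1 (hM C' hC').1 (hfC C hC (hu C hC))
    (hfC C hC (hv C hC)) (hfC C' hC' (hCC' ▸ hu C hC)) (hfC C' hC' (hCC' ▸ hv C hC))

theorem IsEdgeCliqueCover.card_eq_eccNumber {F : Finset (Set V)} (hF : IsEdgeCliqueCover G F)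
    (hmin : ∀ F', IsEdgeCliqueCover G F' → F.card ≤ F'.card) : F.card = eccNumber G :=
  le_antisymm (le_csInf ⟨_, F, hF, rfl⟩ fun _ ⟨F', hF', hcard⟩ ↦ hcard ▸ hmin F' hF')
    (Nat.sInf_le ⟨F, hF, rfl⟩)

end

theorem stmt12_general {V : Type*} [Fintype V] (G : SimpleGraph V) (hdf : DiamondFree G) :
    ∃ 𝒞 : Finset (Set V), (↑𝒞 : Set (Set V)) = {C | IsMaximalClique G C ∧ 2 ≤ C.ncard} ∧
      IsEdgeCliqueCover G 𝒞 ∧ 𝒞.card = eccNumber G := by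
  have hfin : {C : Set V | IsMaximalClique G C ∧ 2 ≤ C.ncard}.Finite := Set.toFinite _
  have hcover : IsEdgeCliqueCover G hfin.toFinset := by
    refine ⟨fun C hC ↦ (hfin.mem_toFinset.1 hC).1.1, fun u v huv ↦ ?_⟩
    obtain ⟨C, hC, h2, hu, hv⟩ := exists_isMaximalClique_of_adj huv
    exact ⟨C, hfin.mem_toFinset.2 ⟨hC, h2⟩, hu, hv⟩
  refine ⟨hfin.toFinset, hfin.coe_toFinset, hcover, hcover.card_eq_eccNumber fun F hF ↦ ?_⟩
  exact hdf.card_le_card_of_isEdgeCliqueCover (fun C hC ↦ hfin.mem_toFinset.1 hC) hF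

/-- in a diamond-free graph with at least one edge, the set of all maximal
cliques of size at least `2` is a minimum edge clique cover. -/
theorem stmt12 {V : Type*} [Fintype V] (G : SimpleGraph V) (hdf : DiamondFree G)
    (hedge : ∃ u v : V, G.Adj u v) :
    ∃ 𝒞 : Finset (Set V), (↑𝒞 : Set (Set V)) = {C | IsMaximalClique G C ∧ 2 ≤ C.ncard} ∧
      IsEdgeCliqueCover G 𝒞 ∧ 𝒞.card = eccNumber G :=
  stmt12_general G hdf
end

section
/- Let G be a graph with an effective competition cover 𝒞 = {C_1,…,C_{θ_e(G)}} and let D be a digraph accompanying 𝒞. Then |V(D)| = p(G) + θ_e(G), and the number of in-degree-0 vertices of D equals p(G). -/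
/-!
The in-neighbourhoods (restricted to `V`) of the vertices of nonzero in-degree of any digraph
realizing `G` form an edge clique cover of `G`, so such a digraph has at least `θ_e(G)` vertices of
nonzero in-degree, hence at most `|V(D)| - θ_e(G)` vertices of in-degree zero. A digraph
accompanying a minimum edge clique cover has exactly `θ_e(G)` vertices of nonzero in-degree, so it
attains this bound, which is therefore `p(G)`.
-/

open Finset

lemma ncard_setOf_forall_not_add_ncard_setOf_exists {W : Type*} [Finite W] (A : W → W → Prop) :
    {v | ∀ u, ¬ A u v}.ncard + {v | ∃ u, A u v}.ncard = Nat.card W := by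
  have hcompl : {v | ∀ u, ¬ A u v} = {v | ∃ u, A u v}ᶜ := by
    ext v
    simp
  rw [hcompl, Set.ncard_compl_add_ncard]

namespace Realizes

variable {V : Type*} {G : SimpleGraph V} {k : ℕ} {A : (V ⊕ Fin k) → (V ⊕ Fin k) → Prop}

lemma adj_iff (hA : Realizes G k A) {a b : V} :
    G.Adj a b ↔ a ≠ b ∧ ∃ z, A (.inl a) z ∧ A (.inl b) z := by
  have h := congrArg (fun H => H.Adj (Sum.inl a) (Sum.inl b)) hA.2
  simp only [competitionGraph, addIsolated, ne_eq, Sum.inl.injEq, exists_eq_right_right',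
    exists_eq_right', eq_iff_iff] at h
  exact h.symm

lemma isEdgeCliqueCover_image_inNeighbors [Fintype V] [DecidableEq (Set V)]
    [DecidablePred fun z => ∃ u, A u z] (hA : Realizes G k A) :
    IsEdgeCliqueCover G
      (({z | ∃ u, A u z} : Finset (V ⊕ Fin k)).image fun z => {u | A (.inl u) z}) := by
  constructor
  · simp only [mem_image]
    rintro _ ⟨z, -, rfl⟩ a ha b hb hab
    exact hA.adj_iff.2 ⟨hab, z, ha, hb⟩
  · intro a b hab
    obtain ⟨-, z, ha, hb⟩ := hA.adj_iff.1 hab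
    exact ⟨_, mem_image.2 ⟨z, mem_filter.2 ⟨mem_univ _, _, ha⟩, rfl⟩, ha, hb⟩

lemma eccNumber_le_ncard [Finite V] (hA : Realizes G k A) :
    eccNumber G ≤ {z | ∃ u, A u z}.ncard := by
  classical
  have := Fintype.ofFinite V
  calc eccNumber G
      ≤ (({z | ∃ u, A u z} : Finset (V ⊕ Fin k)).image fun z => {u | A (.inl u) z}).card :=
        Nat.sInf_le ⟨_, hA.isEdgeCliqueCover_image_inNeighbors, rfl⟩
    _ ≤ ({z | ∃ u, A u z} : Finset (V ⊕ Fin k)).card := card_image_le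
    _ = {z | ∃ u, A u z}.ncard := by rw [Set.ncard_eq_toFinset_card']; simp

lemma ncard_setOf_forall_not_add_eccNumber_le [Finite V] (hA : Realizes G k A) :
    {v | ∀ u, ¬ A u v}.ncard + eccNumber G ≤ Nat.card (V ⊕ Fin k) := by
  rw [← ncard_setOf_forall_not_add_ncard_setOf_exists A]
  exact Nat.add_le_add_left hA.eccNumber_le_ncard _

end Realizes

lemma predatorIndex_eq_of_ncard_setOf_exists_eq {V : Type*} [Finite V] {G : SimpleGraph V}
    {A : (V ⊕ Fin (compNumber G)) → (V ⊕ Fin (compNumber G)) → Prop}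
    (hA : Realizes G (compNumber G) A) (h : {z | ∃ u, A u z}.ncard = eccNumber G) :
    predatorIndex G = {v | ∀ u, ¬ A u v}.ncard := by
  refine IsGreatest.csSup_eq ⟨⟨A, hA, rfl⟩, ?_⟩
  rintro _ ⟨A', hA', rfl⟩
  have hle := hA'.ncard_setOf_forall_not_add_eccNumber_le
  have hsum := ncard_setOf_forall_not_add_ncard_setOf_exists A
  omega

lemma Accompanies.ncard_setOf_exists {V : Type*} {G : SimpleGraph V} {𝒞 : Finset (Set V)}
    {A : (V ⊕ Fin (compNumber G)) → (V ⊕ Fin (compNumber G)) → Prop}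
    (hA : Accompanies G 𝒞 A) : {z | ∃ u, A u z}.ncard = 𝒞.card := by
  obtain ⟨-, w, hw, -, hrange⟩ := hA
  rw [hrange, ← Set.image_univ, Set.ncard_image_of_injective _ hw, Set.ncard_univ,
    Nat.card_eq_fintype_card, Fintype.card_coe]

/-- for a digraph `A` accompanying an effective competition cover `𝒞` of `G`,
`|V(D)| = p(G) + θ_e(G)` and the number of in-degree-0 vertices of `D` is `p(G)`. -/
theorem stmt13 {V : Type*} [Fintype V] (G : SimpleGraph V) (𝒞 : Finset (Set V))
    (hecc : IsEffectiveCompetitionCover G 𝒞)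
    (A : (V ⊕ Fin (compNumber G)) → (V ⊕ Fin (compNumber G)) → Prop)
    (hA : Accompanies G 𝒞 A) :
    Fintype.card (V ⊕ Fin (compNumber G)) = predatorIndex G + eccNumber G ∧
      {v | ∀ u, ¬ A u v}.ncard = predatorIndex G := by
  obtain ⟨-, hcard, -⟩ := hecc
  have hnonzero : {z | ∃ u, A u z}.ncard = eccNumber G := hA.ncard_setOf_exists.trans hcard
  have hp := predatorIndex_eq_of_ncard_setOf_exists_eq hA.1 hnonzero
  refine ⟨?_, hp.symm⟩
  rw [← Nat.card_eq_fintype_card, ← ncard_setOf_forall_not_add_ncard_setOf_exists A, hp,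
    hnonzero]
end

section
/- Let G be a graph with an effective competition cover 𝒞. Then the cliques in 𝒞 can be labeled C_1,…,C_{θ_e(G)} so that for every k with 1 ≤ k ≤ θ_e(G), p(G) ≥ |C_k ∪ C_{k+1} ∪ ⋯ ∪ C_{θ_e(G)}| − θ_e(G) + k. -/
/-!
Order the cliques of the cover so that every arc between their prey vertices `w_i → w_j` goes
from a later clique to an earlier one; this is a topological sort of the acyclic digraph. A vertex
of `C_k ∪ ⋯ ∪ C_θ` either has in-degree `0`, and there are at most `p(G)` such vertices, or is the
prey `w_i` of some clique. In the latter case it lies in some `C_j` with `j ≥ k`, so `w_i → w_j`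
is an arc and `i > j ≥ k`, which leaves at most `θ - k` choices for `i` (`1`-indexed).
-/

open Relation

theorem exists_equiv_fin_lt_of_acyclic {α : Type*} [Fintype α] {r : α → α → Prop}
    (hr : ∀ a, ¬ TransGen r a a) {n : ℕ} (hn : Fintype.card α = n) :
    ∃ e : α ≃ Fin n, ∀ a b, r a b → e a < e b := by
  let _ : PartialOrder α :=
    { le := ReflTransGen r
      le_refl := fun _ => .refl
      le_trans := fun _ _ _ => .trans
      le_antisymm := fun a b hab hba => by
        rcases reflTransGen_iff_eq_or_transGen.mp hab with h | h
        · exact h.symm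
        · exact (hr a (h.trans_left hba)).elim }
  let _ : Fintype (LinearExtension α) := ‹Fintype α›
  let f := (Fintype.orderIsoFinOfCardEq (LinearExtension α) hn).symm
  refine ⟨(Equiv.refl α).trans f.toEquiv, fun a b hab => f.strictMono ?_⟩
  have hne : a ≠ b := by rintro rfl; exact hr a (.single hab)
  exact lt_of_le_of_ne (toLinearExtension.monotone (ReflTransGen.single hab)) hne

theorem ncard_le_ncard_sources_add {W ι : Type*} [Finite W] [Finite ι] {A : W → W → Prop}
    {w : ι → W} (hw : {x | ∃ u, A u x} = Set.range w) (S : Set W) :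
    S.ncard ≤ {x | ∀ u, ¬ A u x}.ncard + {i | w i ∈ S}.ncard := by
  have hS : S ⊆ {x | ∀ u, ¬ A u x} ∪ w '' {i | w i ∈ S} := by
    intro x hx
    by_cases h : ∃ u, A u x
    · obtain ⟨i, rfl⟩ : x ∈ Set.range w := hw ▸ h
      exact Or.inr ⟨i, hx, rfl⟩
    · exact Or.inl (not_exists.mp h)
  calc S.ncard ≤ ({x | ∀ u, ¬ A u x} ∪ w '' {i | w i ∈ S}).ncard := Set.ncard_le_ncard hS
    _ ≤ {x | ∀ u, ¬ A u x}.ncard + (w '' {i | w i ∈ S}).ncard := Set.ncard_union_le _ _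
    _ ≤ {x | ∀ u, ¬ A u x}.ncard + {i | w i ∈ S}.ncard := by
      gcongr; exact Set.ncard_image_le (Set.toFinite _)

theorem Realizes.ncard_sources_le_predatorIndex {V : Type*} [Finite V] {G : SimpleGraph V}
    {A : (V ⊕ Fin (compNumber G)) → (V ⊕ Fin (compNumber G)) → Prop}
    (hA : Realizes G (compNumber G) A) :
    {v | ∀ u, ¬ A u v}.ncard ≤ predatorIndex G :=
  le_csSup ⟨Nat.card (V ⊕ Fin (compNumber G)), by rintro n ⟨B, -, rfl⟩; exact Set.ncard_le_card _⟩
    ⟨A, hA, rfl⟩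

theorem ncard_iUnion_ge_add_le_predatorIndex_add {V : Type*} [Finite V] {G : SimpleGraph V}
    {A : (V ⊕ Fin (compNumber G)) → (V ⊕ Fin (compNumber G)) → Prop}
    (hA : Realizes G (compNumber G) A) {n : ℕ} {σ : Fin n → Set V}
    {w : Fin n → V ⊕ Fin (compNumber G)} (hw_range : {x | ∃ u, A u x} = Set.range w)
    (hw_arc : ∀ i, ∀ v ∈ σ i, A (.inl v) (w i)) (hw_order : ∀ i j, A (w i) (w j) → j < i)
    (k : Fin n) :
    (⋃ i ∈ {i | k ≤ i}, σ i).ncard + k + 1 ≤ predatorIndex G + n := by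
  set U := ⋃ i ∈ {i | k ≤ i}, σ i
  have hprey : {i | w i ∈ Sum.inl '' U} ⊆ Set.Ioi k := by
    rintro i ⟨v, hv, hwi⟩
    obtain ⟨j, hkj, hvj⟩ := Set.mem_iUnion₂.mp hv
    exact lt_of_le_of_lt hkj (hw_order i j (hwi ▸ hw_arc j v hvj))
  have hU : U.ncard ≤ predatorIndex G + (n - 1 - k) :=
    calc U.ncard = (Sum.inl '' U : Set (V ⊕ Fin (compNumber G))).ncard :=
          (Set.ncard_image_of_injective U Sum.inl_injective).symm
      _ ≤ {x | ∀ u, ¬ A u x}.ncard + {i | w i ∈ Sum.inl '' U}.ncard :=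
          ncard_le_ncard_sources_add hw_range _
      _ ≤ predatorIndex G + (Set.Ioi k).ncard :=
          add_le_add hA.ncard_sources_le_predatorIndex (Set.ncard_le_ncard hprey)
      _ = predatorIndex G + (n - 1 - k) := by simp [Set.ncard_eq_toFinset_card']
  have hk : (k : ℕ) < n := k.isLt
  omega

/-- the cliques of an effective competition cover can be labeled
`C_1, …, C_{θ_e(G)}` (here `0`-indexed by `Fin (θ_e G)`) so that for every `k`,
`p(G) ≥ |C_k ∪ ⋯ ∪ C_{θ_e(G)}| − θ_e(G) + k`. -/
theorem stmt15 {V : Type*} [Fintype V] (G : SimpleGraph V) (𝒞 : Finset (Set V))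
    (hecc : IsEffectiveCompetitionCover G 𝒞) :
    ∃ σ : Fin (eccNumber G) → Set V, Function.Injective σ ∧ (∀ i, σ i ∈ 𝒞) ∧
      (∀ C ∈ 𝒞, ∃ i, σ i = C) ∧
      ∀ k : Fin (eccNumber G),
        ((⋃ i ∈ {i : Fin (eccNumber G) | k ≤ i}, σ i).ncard : ℤ) - (eccNumber G : ℤ)
            + ((k : ℕ) + 1 : ℤ) ≤ (predatorIndex G : ℤ) := by
  obtain ⟨-, hcard, -, A, hA, w, -, hw_arc, hw_range⟩ := hecc
  have hacyc : ∀ C, ¬ TransGen (fun C D : 𝒞 => A (w D) (w C)) C C := fun C h =>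
    hA.1 (w C) (transGen_swap.mp (h.lift w fun _ _ => id))
  obtain ⟨e, he⟩ := exists_equiv_fin_lt_of_acyclic hacyc (by rw [Fintype.card_coe, hcard])
  refine ⟨fun i => e.symm i, Subtype.val_injective.comp e.symm.injective, fun i => (e.symm i).2,
    fun C hC => ⟨e ⟨C, hC⟩, by simp⟩, fun k => ?_⟩
  have hw_order : ∀ i j, A (w (e.symm i)) (w (e.symm j)) → j < i := fun i j h => by
    simpa using he _ _ h
  have := ncard_iUnion_ge_add_le_predatorIndex_add hA (e.symm.surjective.range_comp w ▸ hw_range)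
    (fun i => hw_arc (e.symm i)) hw_order k
  beta_reduce at this ⊢
  omega
end
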